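/- Let a ≠ 0, T ≥ 1, and suppose |a| ≥ c₁e^{−T} and |a| ≤ c₂e^{T}, with t ∈ [0,1] and s ∈ [−T, T+1]. Then the function φ(t,s) = arcosh((a² + e^{2t} + e^{2s})/(2e^{t+s})) satisfies e^{−CT} ≤ |∂²φ/∂s∂t(t,s)| ≤ e^{CT} for a constant C depending only on c₁, c₂ (not on T, a, t, s). -/

import Mathlib

/-- Inverse hyperbolic cosine: `arcosh x = log (x + √(x² − 1))`. -/
noncomputable def arcosh (x : ℝ) : ℝ := Real.log (x + Real.sqrt (x ^ 2 - 1))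

/-- Hyperbolic distance between `(0, eᵗ)` and `(a, eˢ)` in the half-plane model. -/
noncomputable def phiPar (a t s : ℝ) : ℝ :=
  arcosh ((a ^ 2 + Real.exp (2 * t) + Real.exp (2 * s)) / (2 * Real.exp (t + s)))

/-!
Write `P = e^{2t}`, `Q = e^{2s}` and `D = (a² + P + Q)² − 4PQ`, so that the argument `u` of
`arcosh` satisfies `u² − 1 = D / (2e^{t+s})²`. Differentiating gives `∂ₜφ = (P − a² − Q)/√D`
and `∂ₛ∂ₜφ = −8PQa²/D^{3/2}`. Since `a⁴ ≤ D ≤ (a² + P + Q)²`, the mixed derivative lies between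
`8PQa²/(a² + P + Q)³` and `8PQ/a⁴`; on the region every factor is within a bounded power of
`e^{±T}` with constants depending on `c₁, c₂`, and `T ≥ 1` absorbs those constants into `e^{±CT}`.
-/
open Real

noncomputable def phiArg (a t s : ℝ) : ℝ :=
  (a ^ 2 + exp (2 * t) + exp (2 * s)) / (2 * exp (t + s))

noncomputable def phiDisc (a t s : ℝ) : ℝ :=
  (a ^ 2 + exp (2 * t) + exp (2 * s)) ^ 2 - 4 * exp (2 * t) * exp (2 * s)

-- The `arcosh` of the statement is Mathlib's `Real.arcosh` by definition.
lemma phiPar_eq_arcosh_phiArg (a t s : ℝ) : phiPar a t s = Real.arcosh (phiArg a t s) := rfl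

lemma exp_two_mul_eq_sq (x : ℝ) : exp (2 * x) = exp x ^ 2 := by
  rw [two_mul, exp_add, sq]

lemma exp_two_mul_mul_exp_two_mul (t s : ℝ) : exp (2 * t) * exp (2 * s) = exp (t + s) ^ 2 := by
  rw [exp_two_mul_eq_sq, exp_two_mul_eq_sq, exp_add, mul_pow]

lemma sq_le_phiDisc (a t s : ℝ) : (a ^ 2) ^ 2 ≤ phiDisc a t s := by
  unfold phiDisc
  nlinarith [sq_nonneg (exp (2 * t) - exp (2 * s)), sq_nonneg a, exp_pos (2 * t), exp_pos (2 * s)]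

lemma phiDisc_le (a t s : ℝ) : phiDisc a t s ≤ (a ^ 2 + exp (2 * t) + exp (2 * s)) ^ 2 := by
  unfold phiDisc
  nlinarith [exp_pos (2 * t), exp_pos (2 * s)]

lemma phiDisc_pos {a : ℝ} (ha : a ≠ 0) (t s : ℝ) : 0 < phiDisc a t s :=
  (by positivity : 0 < (a ^ 2) ^ 2).trans_le (sq_le_phiDisc a t s)

lemma phiArg_sq_sub_one (a t s : ℝ) :
    phiArg a t s ^ 2 - 1 = phiDisc a t s / (2 * exp (t + s)) ^ 2 := by
  unfold phiArg phiDisc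
  rw [mul_assoc 4, exp_two_mul_mul_exp_two_mul]
  field_simp
  ring

lemma one_lt_phiArg {a : ℝ} (ha : a ≠ 0) (t s : ℝ) : 1 < phiArg a t s := by
  have hpos : 0 < phiArg a t s := by unfold phiArg; positivity
  have hsq : 1 < phiArg a t s ^ 2 := by
    have := div_pos (phiDisc_pos ha t s) (by positivity : 0 < (2 * exp (t + s)) ^ 2)
    linarith [phiArg_sq_sub_one a t s]
  exact (one_lt_sq_iff₀ hpos.le).1 hsq

lemma sqrt_phiArg_sq_sub_one (a t s : ℝ) :
    √(phiArg a t s ^ 2 - 1) = √(phiDisc a t s) / (2 * exp (t + s)) := by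
  rw [phiArg_sq_sub_one, sqrt_div' _ (by positivity), sqrt_sq (by positivity)]

lemma hasDerivAt_phiArg_fst (a t s : ℝ) :
    HasDerivAt (fun t' => phiArg a t' s)
      ((exp (2 * t) - a ^ 2 - exp (2 * s)) / (2 * exp (t + s))) t := by
  have hnum : HasDerivAt (fun t' => a ^ 2 + exp (2 * t') + exp (2 * s)) (2 * exp (2 * t)) t := by
    simpa [mul_comm] using (((hasDerivAt_id t).const_mul 2).exp.const_add (a ^ 2)).add_const
      (exp (2 * s))
  have hden : HasDerivAt (fun t' => 2 * exp (t' + s)) (2 * exp (t + s)) t := by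
    simpa using ((hasDerivAt_id t).add_const s).exp.const_mul 2
  refine (hnum.div hden (by positivity)).congr_deriv ?_
  field_simp
  ring

lemma hasDerivAt_phiPar_fst {a : ℝ} (ha : a ≠ 0) (t s : ℝ) :
    HasDerivAt (fun t' => phiPar a t' s)
      ((exp (2 * t) - a ^ 2 - exp (2 * s)) / √(phiDisc a t s)) t := by
  simp only [phiPar_eq_arcosh_phiArg]
  refine ((hasDerivAt_arcosh (one_lt_phiArg ha t s)).comp t
    (hasDerivAt_phiArg_fst a t s)).congr_deriv ?_
  rw [sqrt_phiArg_sq_sub_one]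
  have hsqrt := sqrt_pos.2 (phiDisc_pos ha t s)
  field_simp

lemma hasDerivAt_phiDisc_snd (a t s : ℝ) :
    HasDerivAt (fun s' => phiDisc a t s')
      (4 * exp (2 * s) * (a ^ 2 + exp (2 * s) - exp (2 * t))) s := by
  have hQ : HasDerivAt (fun s' => exp (2 * s')) (2 * exp (2 * s)) s := by
    simpa [mul_comm] using ((hasDerivAt_id s).const_mul 2).exp
  refine (((hQ.const_add (a ^ 2 + exp (2 * t))).pow 2).sub
    (hQ.const_mul (4 * exp (2 * t)))).congr_deriv ?_
  ring

lemma hasDerivAt_deriv_phiPar_fst {a : ℝ} (ha : a ≠ 0) (t s : ℝ) :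
    HasDerivAt (fun s' => (exp (2 * t) - a ^ 2 - exp (2 * s')) / √(phiDisc a t s'))
      (-(8 * exp (2 * t) * exp (2 * s) * a ^ 2) / (phiDisc a t s * √(phiDisc a t s))) s := by
  have hD := phiDisc_pos ha t s
  have hnum : HasDerivAt (fun s' => exp (2 * t) - a ^ 2 - exp (2 * s')) (-(2 * exp (2 * s))) s := by
    simpa [mul_comm] using (((hasDerivAt_id s).const_mul 2).exp.const_sub (exp (2 * t) - a ^ 2))
  refine (hnum.div ((hasDerivAt_phiDisc_snd a t s).sqrt hD.ne') (sqrt_pos.2 hD).ne').congr_deriv ?_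
  field_simp
  rw [sq_sqrt hD.le]
  unfold phiDisc
  ring

lemma deriv_deriv_phiPar {a : ℝ} (ha : a ≠ 0) (t s : ℝ) :
    deriv (fun s' => deriv (fun t' => phiPar a t' s') t) s =
      -(8 * exp (2 * t) * exp (2 * s) * a ^ 2) / (phiDisc a t s * √(phiDisc a t s)) := by
  simp only [fun s' => (hasDerivAt_phiPar_fst ha t s').deriv]
  exact (hasDerivAt_deriv_phiPar_fst ha t s).deriv

lemma abs_deriv_deriv_phiPar {a : ℝ} (ha : a ≠ 0) (t s : ℝ) :
    |deriv (fun s' => deriv (fun t' => phiPar a t' s') t) s| =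
      8 * exp (2 * t) * exp (2 * s) * a ^ 2 / (phiDisc a t s * √(phiDisc a t s)) := by
  have hD := phiDisc_pos ha t s
  rw [deriv_deriv_phiPar ha, neg_div, abs_neg, abs_of_pos (by positivity)]

lemma abs_deriv_deriv_phiPar_le {a : ℝ} (ha : a ≠ 0) (t s : ℝ) :
    |deriv (fun s' => deriv (fun t' => phiPar a t' s') t) s| ≤
      8 * (exp t * exp s) ^ 2 / |a| ^ 4 := by
  have hD := phiDisc_pos ha t s
  have hsqrt : a ^ 2 ≤ √(phiDisc a t s) := (le_sqrt (by positivity) hD.le).2 (sq_le_phiDisc a t s)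
  calc |deriv (fun s' => deriv (fun t' => phiPar a t' s') t) s|
      = 8 * exp (2 * t) * exp (2 * s) * a ^ 2 / (phiDisc a t s * √(phiDisc a t s)) :=
        abs_deriv_deriv_phiPar ha t s
    _ ≤ 8 * exp (2 * t) * exp (2 * s) * a ^ 2 / ((a ^ 2) ^ 2 * a ^ 2) := by
        gcongr
        exact sq_le_phiDisc a t s
    _ = 8 * (exp t * exp s) ^ 2 / |a| ^ 4 := by
        rw [exp_two_mul_eq_sq, exp_two_mul_eq_sq, Even.pow_abs (by decide)]
        field_simp

lemma le_abs_deriv_deriv_phiPar {a : ℝ} (ha : a ≠ 0) (t s : ℝ) :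
    8 * (exp t * exp s * |a|) ^ 2 / (|a| ^ 2 + exp t ^ 2 + exp s ^ 2) ^ 3 ≤
      |deriv (fun s' => deriv (fun t' => phiPar a t' s') t) s| := by
  have hD := phiDisc_pos ha t s
  set S := a ^ 2 + exp (2 * t) + exp (2 * s) with hS
  have hsqrt : √(phiDisc a t s) ≤ S := (sqrt_le_left (by positivity)).2 (phiDisc_le a t s)
  calc 8 * (exp t * exp s * |a|) ^ 2 / (|a| ^ 2 + exp t ^ 2 + exp s ^ 2) ^ 3
      = 8 * exp (2 * t) * exp (2 * s) * a ^ 2 / (S ^ 2 * S) := by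
        rw [hS, exp_two_mul_eq_sq, exp_two_mul_eq_sq, mul_pow, sq_abs]
        ring
    _ ≤ 8 * exp (2 * t) * exp (2 * s) * a ^ 2 / (phiDisc a t s * √(phiDisc a t s)) := by
        gcongr
        exact phiDisc_le a t s
    _ = |deriv (fun s' => deriv (fun t' => phiPar a t' s') t) s| :=
        (abs_deriv_deriv_phiPar ha t s).symm

lemma exists_exp_bounds_of_pow_bounds {k K : ℝ} (hk : 0 < k) (hK : 0 < K) (m n : ℕ) :
    ∃ C > 0, ∀ T x : ℝ, 1 ≤ T → k / exp T ^ m ≤ x → x ≤ K * exp T ^ n →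
      exp (-(C * T)) ≤ x ∧ x ≤ exp (C * T) := by
  refine ⟨m + n + |log k| + |log K| + 1, by positivity, fun T x hT hlo hhi => ⟨?_, ?_⟩⟩
  · refine le_trans ?_ hlo
    rw [← exp_log hk, ← exp_nat_mul, ← exp_sub, exp_le_exp, log_exp]
    nlinarith [neg_abs_le (log k), mul_nonneg (abs_nonneg (log k)) (sub_nonneg.2 hT),
      mul_nonneg (abs_nonneg (log K)) (zero_le_one.trans hT),
      mul_nonneg (Nat.cast_nonneg n : (0 : ℝ) ≤ n) (zero_le_one.trans hT)]
  · refine hhi.trans ?_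
    rw [← exp_log hK, ← exp_nat_mul, ← exp_add, exp_le_exp, log_exp]
    nlinarith [le_abs_self (log K), mul_nonneg (abs_nonneg (log K)) (sub_nonneg.2 hT),
      mul_nonneg (abs_nonneg (log k)) (zero_le_one.trans hT),
      mul_nonneg (Nat.cast_nonneg m : (0 : ℝ) ≤ m) (zero_le_one.trans hT)]

lemma abs_deriv_deriv_phiPar_pow_bounds {c₁ c₂ a T t s : ℝ} (hc₁ : 0 < c₁) (hT : 0 ≤ T)
    (hlo : c₁ * exp (-T) ≤ |a|) (hhi : |a| ≤ c₂ * exp T) (ht : t ∈ Set.Icc 0 1)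
    (hs : s ∈ Set.Icc (-T) (T + 1)) :
    8 * c₁ ^ 2 / (c₂ ^ 2 + 2 * exp 1 ^ 2) ^ 3 / exp T ^ 10 ≤
        |deriv (fun s' => deriv (fun t' => phiPar a t' s') t) s| ∧
      |deriv (fun s' => deriv (fun t' => phiPar a t' s') t) s| ≤
        8 * exp 1 ^ 4 / c₁ ^ 4 * exp T ^ 6 := by
  have ha : a ≠ 0 := abs_pos.1 ((by positivity : 0 < c₁ * exp (-T)).trans_le hlo)
  rw [exp_neg] at hlo
  set E := exp T
  have hE : 1 ≤ E := one_le_exp hT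
  have ht_lo : 1 ≤ exp t := one_le_exp ht.1
  have ht_hi : exp t ≤ exp 1 := exp_le_exp.2 ht.2
  have hs_lo : E⁻¹ ≤ exp s := by rw [← exp_neg]; exact exp_le_exp.2 hs.1
  have hs_hi : exp s ≤ exp 1 * E := by rw [← exp_add]; exact exp_le_exp.2 (by linarith [hs.2])
  constructor
  · have hsum : |a| ^ 2 + exp t ^ 2 + exp s ^ 2 ≤ (c₂ ^ 2 + 2 * exp 1 ^ 2) * E ^ 2 := by
      have : exp 1 ^ 2 ≤ exp 1 ^ 2 * E ^ 2 := le_mul_of_one_le_right (by positivity) (one_le_pow₀ hE)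
      calc |a| ^ 2 + exp t ^ 2 + exp s ^ 2 ≤ (c₂ * E) ^ 2 + exp 1 ^ 2 + (exp 1 * E) ^ 2 := by
            gcongr
        _ ≤ (c₂ ^ 2 + 2 * exp 1 ^ 2) * E ^ 2 := by linarith
    calc 8 * c₁ ^ 2 / (c₂ ^ 2 + 2 * exp 1 ^ 2) ^ 3 / E ^ 10
        = 8 * (1 * E⁻¹ * (c₁ * E⁻¹)) ^ 2 / ((c₂ ^ 2 + 2 * exp 1 ^ 2) * E ^ 2) ^ 3 := by
          field_simp
      _ ≤ 8 * (exp t * exp s * |a|) ^ 2 / (|a| ^ 2 + exp t ^ 2 + exp s ^ 2) ^ 3 := by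
          gcongr
      _ ≤ |deriv (fun s' => deriv (fun t' => phiPar a t' s') t) s| :=
          le_abs_deriv_deriv_phiPar ha t s
  · calc |deriv (fun s' => deriv (fun t' => phiPar a t' s') t) s|
        ≤ 8 * (exp t * exp s) ^ 2 / |a| ^ 4 := abs_deriv_deriv_phiPar_le ha t s
      _ ≤ 8 * (exp 1 * (exp 1 * E)) ^ 2 / (c₁ * E⁻¹) ^ 4 := by gcongr
      _ = 8 * exp 1 ^ 4 / c₁ ^ 4 * E ^ 6 := by
          field_simp

theorem stmt19_general (c₁ c₂ : ℝ) (hc₁ : 0 < c₁) :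
    ∃ C > (0 : ℝ), ∀ a T t s : ℝ, a ≠ 0 → 1 ≤ T →
      c₁ * Real.exp (-T) ≤ |a| → |a| ≤ c₂ * Real.exp T →
      t ∈ Set.Icc (0 : ℝ) 1 → s ∈ Set.Icc (-T) (T + 1) →
      Real.exp (-(C * T)) ≤ |deriv (fun s' => deriv (fun t' => phiPar a t' s') t) s| ∧
      |deriv (fun s' => deriv (fun t' => phiPar a t' s') t) s| ≤ Real.exp (C * T) := by
  obtain ⟨C, hC, hbounds⟩ := exists_exp_bounds_of_pow_bounds
    (by positivity : 0 < 8 * c₁ ^ 2 / (c₂ ^ 2 + 2 * exp 1 ^ 2) ^ 3)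
    (by positivity : 0 < 8 * exp 1 ^ 4 / c₁ ^ 4) 10 6
  refine ⟨C, hC, fun a T t s _ hT hlo hhi ht hs => ?_⟩
  obtain ⟨hlower, hupper⟩ :=
    abs_deriv_deriv_phiPar_pow_bounds hc₁ (zero_le_one.trans hT) hlo hhi ht hs
  exact hbounds T _ hT hlower hupper

theorem stmt19 (c₁ c₂ : ℝ) (hc₁ : 0 < c₁) (hc₂ : 0 < c₂) :
    ∃ C > (0 : ℝ), ∀ a T t s : ℝ, a ≠ 0 → 1 ≤ T →
      c₁ * Real.exp (-T) ≤ |a| → |a| ≤ c₂ * Real.exp T →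
      t ∈ Set.Icc (0 : ℝ) 1 → s ∈ Set.Icc (-T) (T + 1) →
      Real.exp (-(C * T)) ≤ |deriv (fun s' => deriv (fun t' => phiPar a t' s') t) s| ∧
      |deriv (fun s' => deriv (fun t' => phiPar a t' s') t) s| ≤ Real.exp (C * T) :=
  stmt19_general c₁ c₂ hc₁
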